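/- Let A ∈ B(H1, H2) with Moore–Penrose inverse B, and T_{B*} = B*(I + BB*)^{-1/2} + A(I + BB*)^{-1/2}. Then A = (I + B*B)^{-1/2} T_{B*}, i.e. every bounded operator factors through the 'square root' of its Moore–Penrose inverse in this way. -/

import Mathlib

open scoped InnerProductSpace

set_option synthInstance.maxHeartbeats 1000000
set_option maxHeartbeats 2000000

lemma commute_cfc' {E : Type*} [NormedAddCommGroup E] [InnerProductSpace ℂ E] [CompleteSpace E]
    (a b : E →L[ℂ] E) (ha : IsSelfAdjoint a) (hab : a * b = b * a) (f : ℝ → ℝ) :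
    cfc f a * b = b * cfc f a := by
  by_cases hf : ContinuousOn f (spectrum ℝ a)
  · rw [cfc_apply f a ha hf]
    have hcompact : CompactSpace (spectrum ℝ a) := by infer_instance
    set K : Subalgebra ℝ C(spectrum ℝ a, ℝ) :=
      (Subalgebra.centralizer ℝ {b}).comap (cfcHom ha (R := ℝ)).toAlgHom with hK
    have hKclosed : IsClosed (K : Set C(spectrum ℝ a, ℝ)) := by
      have h1 : IsClosed ((Subalgebra.centralizer ℝ {b} : Subalgebra ℝ (E →L[ℂ] E)) : Set (E →L[ℂ] E)) := by
        have : ((Subalgebra.centralizer ℝ {b} : Subalgebra ℝ (E →L[ℂ] E)) : Set (E →L[ℂ] E))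
            = {x | x * b = b * x} := by
          ext x
          simp only [SetLike.mem_coe, Subalgebra.mem_centralizer_iff, Set.mem_singleton_iff,
            Set.mem_setOf_eq, forall_eq]
          tauto
        rw [this]
        exact isClosed_eq (continuous_id.mul continuous_const) (continuous_const.mul continuous_id)
      exact h1.preimage (cfcHom_continuous ha)
    have hpoly : polynomialFunctions (spectrum ℝ a) ≤ K := by
      rw [polynomialFunctions.eq_adjoin_X]
      apply Algebra.adjoin_le
      intro g hg
      rw [Set.mem_singleton_iff] at hg
      subst hg
      have hgen : (Polynomial.toContinuousMapOnAlgHom (spectrum ℝ a) Polynomial.X)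
          = ((ContinuousMap.id ℝ).restrict (spectrum ℝ a)) := by
        ext x; simp
      show _ ∈ Subalgebra.centralizer ℝ {b}
      rw [Subalgebra.mem_centralizer_iff]
      intro c hc
      rw [Set.mem_singleton_iff] at hc
      show c * cfcHom ha _ = cfcHom ha _ * c
      rw [hgen, cfcHom_id ha, hc]
      exact hab.symm
    have htop : K = ⊤ := by
      rw [eq_top_iff, ← polynomialFunctions.topologicalClosure (spectrum ℝ a)]
      exact Subalgebra.topologicalClosure_minimal hpoly hKclosed
    have : (⟨(spectrum ℝ a).restrict f, hf.restrict⟩ : C(spectrum ℝ a, ℝ)) ∈ K :=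
      htop ▸ trivial
    have := Subalgebra.mem_centralizer_iff ℝ |>.mp this b rfl
    exact this.symm
  · rw [cfc_apply_of_not_continuousOn a hf]
    simp

lemma intertwine_sqrt {E F : Type*}
    [NormedAddCommGroup E] [InnerProductSpace ℂ E] [CompleteSpace E]
    [NormedAddCommGroup F] [InnerProductSpace ℂ F] [CompleteSpace F]
    (q : E →L[ℂ] E) (p : F →L[ℂ] F) (hq : q.IsPositive) (hp : p.IsPositive)
    (T : E →L[ℂ] F) (h : ∀ x, p (p (T x)) = T (q (q x))) :
    ∀ x, p (T x) = T (q x) := by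
  let L : WithLp 2 (E × F) ≃L[ℂ] E × F := WithLp.prodContinuousLinearEquiv 2 ℂ E F
  let M : WithLp 2 (E × F) →L[ℂ] WithLp 2 (E × F) :=
    (L.symm : (E × F) →L[ℂ] WithLp 2 (E × F)) ∘L ((q.prodMap p) ∘L (L : WithLp 2 (E × F) →L[ℂ] E × F))
  let N : WithLp 2 (E × F) →L[ℂ] WithLp 2 (E × F) :=
    (L.symm : (E × F) →L[ℂ] WithLp 2 (E × F)) ∘L
    ((ContinuousLinearMap.inr ℂ E F ∘L T ∘L ContinuousLinearMap.fst ℂ E F) ∘L (L : WithLp 2 (E × F) →L[ℂ] E × F))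
  have hM : ∀ v : WithLp 2 (E × F), M v = (WithLp.equiv 2 (E × F)).symm (q v.fst, p v.snd) := by
    intro v; rfl
  have hN : ∀ v : WithLp 2 (E × F), N v = (WithLp.equiv 2 (E × F)).symm (0, T v.fst) := by
    intro v; rfl
  have hfst : ∀ (a : E) (b : F), ((WithLp.equiv 2 (E × F)).symm (a, b)).fst = a := fun _ _ => rfl
  have hsnd : ∀ (a : E) (b : F), ((WithLp.equiv 2 (E × F)).symm (a, b)).snd = b := fun _ _ => rfl
  -- M is positive
  have hMpos : M.IsPositive := by
    constructor
    · intro v w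
      show ⟪M v, w⟫_ℂ = ⟪v, M w⟫_ℂ
      rw [hM v, hM w]
      simp only [WithLp.prod_inner_apply, hfst, hsnd]
      exact congrArg₂ HAdd.hAdd
        ((ContinuousLinearMap.isSelfAdjoint_iff_isSymmetric.mp hq.isSelfAdjoint) v.fst w.fst)
        ((ContinuousLinearMap.isSelfAdjoint_iff_isSymmetric.mp hp.isSelfAdjoint) v.snd w.snd)
    · intro v
      show 0 ≤ RCLike.re ⟪M v, v⟫_ℂ
      rw [hM v]
      simp only [WithLp.prod_inner_apply, hfst, hsnd, map_add]
      exact add_nonneg (hq.re_inner_nonneg_left v.fst) (hp.re_inner_nonneg_left v.snd)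
  have hM0 : (0 : WithLp 2 (E × F) →L[ℂ] WithLp 2 (E × F)) ≤ M := (ContinuousLinearMap.nonneg_iff_isPositive M).mpr hMpos
  -- N commutes with M * M
  have hcomm2 : (M * M) * N = N * (M * M) := by
    ext v
    show M (M (N v)) = N (M (M v))
    rw [hN v, hM, hM, hM v, hM, hN]
    simp only [hfst, hsnd, map_zero]
    rw [h v.fst]
  -- sqrt of M * M is M
  have hMM0 : (0 : WithLp 2 (E × F) →L[ℂ] WithLp 2 (E × F)) ≤ M * M := by
    have := hMpos.isSelfAdjoint
    calc (0 : WithLp 2 (E × F) →L[ℂ] WithLp 2 (E × F)) ≤ star M * M := star_mul_self_nonneg M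
    _ = M * M := by rw [this.star_eq]
  have hsa : IsSelfAdjoint (M * M) := by
    have h' := IsSelfAdjoint.star_mul_self M
    rwa [hMpos.isSelfAdjoint.star_eq] at h'
  set s : WithLp 2 (E × F) →L[ℂ] WithLp 2 (E × F) := cfc Real.sqrt (M * M) with hs
  have hs0 : (0 : WithLp 2 (E × F) →L[ℂ] WithLp 2 (E × F)) ≤ s := by
    apply cfc_nonneg
    intro x hx
    exact Real.sqrt_nonneg x
  have hss : s * s = M * M := by
    rw [hs, ← cfc_mul Real.sqrt Real.sqrt (M * M)]
    have : cfc (fun x => Real.sqrt x * Real.sqrt x) (M * M) = cfc (fun x : ℝ => x) (M * M) := by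
      apply cfc_congr
      intro x hx
      have hx0 : (0:ℝ) ≤ x := spectrum_nonneg_of_nonneg hMM0 hx
      exact Real.mul_self_sqrt hx0
    rw [this, cfc_id' ℝ (M * M)]
  have hsM : s = M := by
    have h1 : CFC.sqrt (M * M) = s := (CFC.sqrt_eq_iff (M*M) s hMM0 hs0).mpr hss
    have h2 : CFC.sqrt (M * M) = M := CFC.sqrt_mul_self M hM0
    rw [← h1, h2]
  have hcomm : M * N = N * M := by
    rw [← hsM, hs]
    exact commute_cfc' (M * M) N hsa hcomm2 Real.sqrt
  intro x
  have := congrFun (congrArg DFunLike.coe hcomm) ((WithLp.equiv 2 (E × F)).symm (x, 0))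
  simp only [ContinuousLinearMap.mul_apply] at this
  rw [hN, hM, hN, hM] at this
  simp only [hfst, hsnd, map_zero] at this
  have := congrArg (fun z : WithLp 2 (E × F) => z.snd) this
  simpa [hsnd] using this


variable {H1 H2 : Type*}
  [NormedAddCommGroup H1] [InnerProductSpace ℂ H1] [CompleteSpace H1]
  [NormedAddCommGroup H2] [InnerProductSpace ℂ H2] [CompleteSpace H2]

/-- `B` is the Moore–Penrose inverse of the bounded operator `A : H1 → H2`: a closed densely
defined operator with domain `R(A) ⊕ N(A*)`, null space `N(A*)`, satisfying `ABA = A`,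
`BAB = B`, `AB ⊆ P_{cl R(A)}` and `BA ⊆ P_{cl R(B)}`. -/
def IsMPInverse (A : H1 →L[ℂ] H2) (B : H2 →ₗ.[ℂ] H1) : Prop :=
  B.IsClosed ∧ Dense (B.domain : Set H2) ∧
    B.domain = LinearMap.range (A : H1 →ₗ[ℂ] H2) ⊔
      LinearMap.ker ((ContinuousLinearMap.adjoint A : H2 →L[ℂ] H1) : H2 →ₗ[ℂ] H1) ∧
    (∀ y : B.domain, B y = 0 ↔ ContinuousLinearMap.adjoint A (y : H2) = 0) ∧
    (∀ x : H1, ∃ h : A x ∈ B.domain, A (B ⟨A x, h⟩) = A x) ∧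
    (∀ y : B.domain, ∃ h : A (B y) ∈ B.domain, B ⟨A (B y), h⟩ = B y) ∧
    (∀ y : B.domain, A (B y) ∈ (LinearMap.range (A : H1 →ₗ[ℂ] H2)).topologicalClosure ∧
      ∀ z ∈ (LinearMap.range (A : H1 →ₗ[ℂ] H2)).topologicalClosure, ⟪(y : H2) - A (B y), z⟫_ℂ = 0) ∧
    (∀ (x : H1) (h : A x ∈ B.domain),
      B ⟨A x, h⟩ ∈ (LinearMap.range B.toFun).topologicalClosure ∧
      ∀ z ∈ (LinearMap.range B.toFun).topologicalClosure, ⟪x - B ⟨A x, h⟩, z⟫_ℂ = 0)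

/-- Decomposition of a bounded operator via its Moore–Penrose inverse:
`A = (I + B*B)^{-1/2} T_{B*}` where `T_{B*} = B*(I + BB*)^{-1/2} + A(I + BB*)^{-1/2}`. -/
theorem decomposition_via_mp (A : H1 →L[ℂ] H2) (B : H2 →ₗ.[ℂ] H1) (hB : IsMPInverse A B)
    (SB : H2 →L[ℂ] H2) (hSBpos : SB.IsPositive)
    (hSB : ∀ y : H2, ∃ h : SB (SB y) ∈ B.domain,
      ∃ h2 : B ⟨SB (SB y), h⟩ ∈ B.adjoint.domain,
      SB (SB y) + B.adjoint ⟨B ⟨SB (SB y), h⟩, h2⟩ = y)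
    (S1 : H1 →L[ℂ] H1) (hS1pos : S1.IsPositive)
    (hS1 : ∀ x : H1, ∃ h1 : S1 (S1 x) ∈ B.adjoint.domain,
      ∃ h2 : B.adjoint ⟨S1 (S1 x), h1⟩ ∈ B.domain,
      S1 (S1 x) + B ⟨B.adjoint ⟨S1 (S1 x), h1⟩, h2⟩ = x)
    (CBs : H1 →L[ℂ] H2)
    (hCBs : ∀ x : H1, ∃ h : S1 x ∈ B.adjoint.domain, CBs x = B.adjoint ⟨S1 x, h⟩) :
    A = SB.comp (CBs + A.comp S1) := by
  obtain ⟨hcl, hdense, hdom, hker, hABA, hBAB, hAB, hBA⟩ := hB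
  have hformal := LinearPMap.adjoint_isFormalAdjoint hdense
  -- uniqueness of solutions of (I + B†B) z = w
  have huniq : ∀ (z₁ z₂ : H2) (h₁ : z₁ ∈ B.domain) (h₂ : z₂ ∈ B.domain)
      (hb₁ : B ⟨z₁, h₁⟩ ∈ B.adjoint.domain) (hb₂ : B ⟨z₂, h₂⟩ ∈ B.adjoint.domain),
      z₁ + B.adjoint ⟨B ⟨z₁, h₁⟩, hb₁⟩ = z₂ + B.adjoint ⟨B ⟨z₂, h₂⟩, hb₂⟩ → z₁ = z₂ := by
    intro z₁ z₂ h₁ h₂ hb₁ hb₂ heq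
    set d : B.domain := (⟨z₁, h₁⟩ : B.domain) - ⟨z₂, h₂⟩ with hd
    have hdval : (d : H2) = z₁ - z₂ := rfl
    have hBd : B d = B ⟨z₁, h₁⟩ - B ⟨z₂, h₂⟩ := B.map_sub _ _
    have hBdmem : B d ∈ B.adjoint.domain := by rw [hBd]; exact sub_mem hb₁ hb₂
    have hsum : (d : H2) + B.adjoint ⟨B d, hBdmem⟩ = 0 := by
      have hadj : B.adjoint ⟨B d, hBdmem⟩
          = B.adjoint ⟨B ⟨z₁, h₁⟩, hb₁⟩ - B.adjoint ⟨B ⟨z₂, h₂⟩, hb₂⟩ := by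
        rw [← B.adjoint.map_sub]
        congr 1
        apply Subtype.ext
        simp [hBd]
      rw [hdval, hadj, sub_add_sub_comm, heq, sub_self]
    have hinner : ⟪(d : H2), (d : H2)⟫_ℂ + ⟪B d, B d⟫_ℂ = 0 := by
      have h0 : ⟪(d : H2) + B.adjoint ⟨B d, hBdmem⟩, (d : H2)⟫_ℂ = 0 := by
        rw [hsum, inner_zero_left]
      rw [inner_add_left] at h0
      rwa [hformal ⟨B d, hBdmem⟩ d] at h0
    have hre := congrArg RCLike.re hinner
    simp only [map_add, map_zero] at hre
    have hd0 : RCLike.re ⟪(d : H2), (d : H2)⟫_ℂ = 0 := by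
      have n1 : (0:ℝ) ≤ RCLike.re ⟪(d : H2), (d : H2)⟫_ℂ := inner_self_nonneg
      have n2 : (0:ℝ) ≤ RCLike.re ⟪B d, B d⟫_ℂ := inner_self_nonneg
      linarith
    have : (d : H2) = 0 := by
      rw [inner_self_eq_norm_sq (𝕜 := ℂ)] at hd0
      have := pow_eq_zero_iff (n := 2) (by norm_num) |>.mp hd0
      exact norm_eq_zero.mp this
    rw [hdval] at this
    exact sub_eq_zero.mp this
  -- range of B† lies in the closure of the range of A
  have hmemRA : ∀ s : B.adjoint.domain,
      (B.adjoint s : H2) ∈ (LinearMap.range (A : H1 →ₗ[ℂ] H2)).topologicalClosure := by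
    intro s
    rw [← Submodule.orthogonal_orthogonal_eq_closure]
    intro z hz
    rw [Submodule.mem_orthogonal] at hz
    have hAz : ContinuousLinearMap.adjoint A z = 0 := by
      apply ext_inner_right ℂ
      intro v
      rw [ContinuousLinearMap.adjoint_inner_left, inner_zero_left]
      rw [← inner_conj_symm]
      rw [hz (A v) (LinearMap.mem_range.mpr ⟨v, rfl⟩)]
      simp
    have hzD : z ∈ B.domain := by
      rw [hdom]
      exact Submodule.mem_sup_right (LinearMap.mem_ker.mpr hAz)
    have hBz : B ⟨z, hzD⟩ = 0 := (hker ⟨z, hzD⟩).mpr hAz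
    have : ⟪(B.adjoint s : H2), z⟫_ℂ = 0 := by
      rw [hformal s ⟨z, hzD⟩, hBz, inner_zero_right]
    rw [← inner_conj_symm, this, map_zero]
  -- A (B y) = y whenever y is in the closure of the range of A
  have hABeq : ∀ (y : B.domain), (y : H2) ∈ (LinearMap.range (A : H1 →ₗ[ℂ] H2)).topologicalClosure →
      A (B y) = y := by
    intro y hy
    obtain ⟨hmem, horth⟩ := hAB y
    have hdmem : (y : H2) - A (B y) ∈ (LinearMap.range (A : H1 →ₗ[ℂ] H2)).topologicalClosure :=
      sub_mem hy hmem
    have h0 : ⟪(y : H2) - A (B y), (y : H2) - A (B y)⟫_ℂ = 0 := horth _ hdmem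
    have := inner_self_eq_zero.mp h0
    exact (eq_of_sub_eq_zero this).symm
  -- B† kills x - B (A x)
  have hBstar_kill : ∀ (x : H1) (h : A x ∈ B.domain),
      ∃ hr : x - B ⟨A x, h⟩ ∈ B.adjoint.domain,
        B.adjoint ⟨x - B ⟨A x, h⟩, hr⟩ = 0 := by
    intro x h
    obtain ⟨hmem, horth⟩ := hBA x h
    have key : ∀ v : B.domain, ⟪(0 : H2), (v : H2)⟫_ℂ = ⟪x - B ⟨A x, h⟩, B v⟫_ℂ := by
      intro v
      rw [inner_zero_left]
      refine (horth (B v) ?_).symm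
      exact Submodule.le_topologicalClosure _ (LinearMap.mem_range.mpr ⟨v, rfl⟩)
    have hr : x - B ⟨A x, h⟩ ∈ B.adjoint.domain :=
      LinearPMap.mem_adjoint_domain_of_exists _ ⟨0, key⟩
    exact ⟨hr, LinearPMap.adjoint_apply_eq hdense ⟨_, hr⟩ key⟩
  -- main claim for A : SB² (A u) = A (S1² u)
  have hCA : ∀ u : H1, SB (SB (A u)) = A (S1 (S1 u)) := by
    intro u
    obtain ⟨h1, h2, heq⟩ := hS1 u
    have hw := hmemRA ⟨S1 (S1 u), h1⟩
    have hABw : A (B ⟨B.adjoint ⟨S1 (S1 u), h1⟩, h2⟩) = B.adjoint ⟨S1 (S1 u), h1⟩ :=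
      hABeq ⟨_, h2⟩ hw
    have hAu : A (S1 (S1 u)) + B.adjoint ⟨S1 (S1 u), h1⟩ = A u := by
      have hc := congrArg A heq
      rw [map_add] at hc
      rwa [hABw] at hc
    have hAsD : A (S1 (S1 u)) ∈ B.domain := by
      rw [hdom]
      exact Submodule.mem_sup_left (LinearMap.mem_range.mpr ⟨S1 (S1 u), rfl⟩)
    obtain ⟨hr, hr0⟩ := hBstar_kill (S1 (S1 u)) hAsD
    have hBAs_mem : B ⟨A (S1 (S1 u)), hAsD⟩ ∈ B.adjoint.domain := by
      have hrw : B ⟨A (S1 (S1 u)), hAsD⟩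
          = S1 (S1 u) - (S1 (S1 u) - B ⟨A (S1 (S1 u)), hAsD⟩) := by abel
      rw [hrw]
      exact sub_mem h1 hr
    have hBadj : B.adjoint ⟨B ⟨A (S1 (S1 u)), hAsD⟩, hBAs_mem⟩
        = B.adjoint ⟨S1 (S1 u), h1⟩ := by
      have hsub : (⟨B ⟨A (S1 (S1 u)), hAsD⟩, hBAs_mem⟩ : B.adjoint.domain)
          = ⟨S1 (S1 u), h1⟩ - ⟨S1 (S1 u) - B ⟨A (S1 (S1 u)), hAsD⟩, hr⟩ := by
        apply Subtype.ext
        simp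
      rw [hsub, B.adjoint.map_sub, hr0, sub_zero]
    obtain ⟨g1, g2, geq⟩ := hSB (A u)
    refine huniq (SB (SB (A u))) (A (S1 (S1 u))) g1 hAsD g2 hBAs_mem ?_
    rw [geq, hBadj]
    exact hAu.symm
  -- main claim for B† : SB² (B† u) = B† (S1² u)
  have hCB : ∀ (u : H1) (hu : u ∈ B.adjoint.domain) (h1' : S1 (S1 u) ∈ B.adjoint.domain),
      SB (SB (B.adjoint ⟨u, hu⟩)) = B.adjoint ⟨S1 (S1 u), h1'⟩ := by
    intro u hu h1'
    obtain ⟨h1, h2, heq⟩ := hS1 u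
    have hBw : B ⟨B.adjoint ⟨S1 (S1 u), h1⟩, h2⟩ = u - S1 (S1 u) := eq_sub_of_add_eq' heq
    have hBwmem : B ⟨B.adjoint ⟨S1 (S1 u), h1⟩, h2⟩ ∈ B.adjoint.domain := by
      rw [hBw]
      exact sub_mem hu h1
    have hBadj : B.adjoint ⟨B ⟨B.adjoint ⟨S1 (S1 u), h1⟩, h2⟩, hBwmem⟩
        = B.adjoint ⟨u, hu⟩ - B.adjoint ⟨S1 (S1 u), h1⟩ := by
      have hsub : (⟨B ⟨B.adjoint ⟨S1 (S1 u), h1⟩, h2⟩, hBwmem⟩ : B.adjoint.domain)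
          = ⟨u, hu⟩ - ⟨S1 (S1 u), h1⟩ := by
        apply Subtype.ext
        simp [hBw]
      rw [hsub, B.adjoint.map_sub]
    obtain ⟨g1, g2, geq⟩ := hSB (B.adjoint ⟨u, hu⟩)
    have := huniq (SB (SB (B.adjoint ⟨u, hu⟩))) (B.adjoint ⟨S1 (S1 u), h1⟩) g1 h2 g2 hBwmem
      (by rw [geq, hBadj]; abel)
    exact this
  -- final pointwise identity : CBs (S1 x) + A (S1² x) = A x
  have hfinal : ∀ x : H1, CBs (S1 x) + A (S1 (S1 x)) = A x := by
    intro x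
    obtain ⟨h1, h2, heq⟩ := hS1 x
    have hw := hmemRA ⟨S1 (S1 x), h1⟩
    have hABw : A (B ⟨B.adjoint ⟨S1 (S1 x), h1⟩, h2⟩) = B.adjoint ⟨S1 (S1 x), h1⟩ :=
      hABeq ⟨_, h2⟩ hw
    have hAx : A (S1 (S1 x)) + B.adjoint ⟨S1 (S1 x), h1⟩ = A x := by
      have hc := congrArg A heq
      rw [map_add] at hc
      rwa [hABw] at hc
    obtain ⟨hc, hceq⟩ := hCBs (S1 x)
    rw [hceq, add_comm]
    exact hAx
  -- intertwining identities
  have hQ1 : ∀ x, SB (A x) = A (S1 x) := intertwine_sqrt S1 SB hS1pos hSBpos A hCA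
  have hQ2pre : ∀ x, SB (SB (CBs x)) = CBs (S1 (S1 x)) := by
    intro x
    obtain ⟨hc, hceq⟩ := hCBs x
    obtain ⟨hc2, hceq2⟩ := hCBs (S1 (S1 x))
    rw [hceq, hceq2]
    exact hCB (S1 x) hc hc2
  have hQ2 : ∀ x, SB (CBs x) = CBs (S1 x) := intertwine_sqrt S1 SB hS1pos hSBpos CBs hQ2pre
  ext x
  show A x = SB ((CBs + A.comp S1) x)
  simp only [ContinuousLinearMap.add_apply, ContinuousLinearMap.comp_apply]
  rw [map_add, hQ2 x, hQ1 (S1 x)]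
  exact (hfinal x).symm
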